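/- Let E be a real Banach space, let K ≥ 0, and let f : ℝ → E → E be such that for every t ∈ [t₀, t_m] the map x ↦ f(t, x) is K-Lipschitz. Let Φ, Ψ : E → E and suppose: (i) for every x ∈ E there is a solution h_x on [t₀, t_m] of the ODE x' = f(t, x) with h_x(t₀) = x and h_x(t_m) = Φ(x); and (ii) for every y ∈ E there is a solution g_y on [t₀, t_m] of the same ODE with g_y(t_m) = y and g_y(t₀) = Ψ(y). Then Φ is a homeomorphism of E onto E: Φ is bijective with inverse Ψ, Φ is Lipschitz with constant exp(K·(t_m − t₀)), and Ψ is Lipschitz with constant exp(K·(t_m − t₀)); in particular both Φ and its inverse are continuous. (Proposition 1's premise in full: the mapping φ_t from t₀ to t_m created by a neural ODE is a homeomorphic mapping, so the topology of its input space is preserved in its output space.) -/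

import Mathlib

/-- `h` is a solution of the ODE `x' = f(t, x)` on the interval `[t₀, tm]`:
`h` is continuous on `[t₀, tm]` and has derivative `f(t, h(t))` within
`[t₀, tm]` at every `t ∈ [t₀, tm]` (one-sided derivatives at the endpoints). -/
def IsODESolutionOn {E : Type*} [NormedAddCommGroup E] [NormedSpace ℝ E]
    (f : ℝ → E → E) (h : ℝ → E) (t₀ tm : ℝ) : Prop :=
  ContinuousOn h (Set.Icc t₀ tm) ∧
    ∀ t ∈ Set.Icc t₀ tm, HasDerivWithinAt h (f t (h t)) (Set.Icc t₀ tm) t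

/-!
Two solutions of `x' = f(t, x)` with `f(t, ·)` `K`-Lipschitz separate at most like
`exp (K (t - t₀))` (Grönwall); reversing time gives the same bound backwards from `tm` to `t₀`.
Comparing the solution through `x` with the one ending at `Φ x` (and the one ending at `y` with
the one starting at `Ψ y`), the bound forces `Ψ ∘ Φ = id` and `Φ ∘ Ψ = id`; comparing two solutions
of the same family gives the Lipschitz constants.
-/

open Set Real NNReal

namespace IsODESolutionOn

variable {E : Type*} [NormedAddCommGroup E] [NormedSpace ℝ E]
  {f : ℝ → E → E} {h g : ℝ → E} {t₀ tm : ℝ} {K : ℝ≥0}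

theorem hasDerivWithinAt_Ici (hh : IsODESolutionOn f h t₀ tm) {t : ℝ} (ht : t ∈ Ico t₀ tm) :
    HasDerivWithinAt h (f t (h t)) (Ici t) t :=
  (hh.2 t (Ico_subset_Icc_self ht)).mono_of_mem_nhdsWithin (Icc_mem_nhdsGE_of_mem ht)

theorem comp_neg (hh : IsODESolutionOn f h t₀ tm) :
    IsODESolutionOn (fun t x => -f (-t) x) (fun t => h (-t)) (-tm) (-t₀) := by
  have hmaps : MapsTo Neg.neg (Icc (-tm) (-t₀)) (Icc t₀ tm) :=
    fun t ht => ⟨le_neg.1 ht.2, neg_le.1 ht.1⟩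
  refine ⟨hh.1.comp continuousOn_neg hmaps, fun t ht => ?_⟩
  simpa [Function.comp_def] using (hh.2 (-t) (hmaps ht)).scomp t (hasDerivAt_neg t).hasDerivWithinAt hmaps

theorem dist_le_exp_mul_dist (ht : t₀ ≤ tm) (hf : ∀ t ∈ Icc t₀ tm, LipschitzWith K (f t))
    (hh : IsODESolutionOn f h t₀ tm) (hg : IsODESolutionOn f g t₀ tm) :
    dist (h tm) (g tm) ≤ exp (K * (tm - t₀)) * dist (h t₀) (g t₀) := by
  rw [mul_comm]
  exact dist_le_of_trajectories_ODE_of_mem (s := fun _ => univ)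
    (fun t ht => (hf t (Ico_subset_Icc_self ht)).lipschitzOnWith)
    hh.1 (fun _ => hh.hasDerivWithinAt_Ici) (fun _ _ => trivial)
    hg.1 (fun _ => hg.hasDerivWithinAt_Ici) (fun _ _ => trivial) le_rfl tm (right_mem_Icc.2 ht)

theorem dist_le_exp_mul_dist_backward (ht : t₀ ≤ tm)
    (hf : ∀ t ∈ Icc t₀ tm, LipschitzWith K (f t))
    (hh : IsODESolutionOn f h t₀ tm) (hg : IsODESolutionOn f g t₀ tm) :
    dist (h t₀) (g t₀) ≤ exp (K * (tm - t₀)) * dist (h tm) (g tm) := by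
  have hf_neg : ∀ t ∈ Icc (-tm) (-t₀), LipschitzWith K (fun x => -f (-t) x) :=
    fun t ht => (hf (-t) ⟨le_neg.1 ht.2, neg_le.1 ht.1⟩).neg
  simpa only [neg_neg, neg_sub_neg] using dist_le_exp_mul_dist (neg_le_neg ht) hf_neg hh.comp_neg hg.comp_neg

theorem eq_right_of_eq_left (ht : t₀ ≤ tm) (hf : ∀ t ∈ Icc t₀ tm, LipschitzWith K (f t))
    (hh : IsODESolutionOn f h t₀ tm) (hg : IsODESolutionOn f g t₀ tm) (h₀ : h t₀ = g t₀) :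
    h tm = g tm :=
  dist_le_zero.1 <| by simpa [h₀] using dist_le_exp_mul_dist ht hf hh hg

theorem eq_left_of_eq_right (ht : t₀ ≤ tm) (hf : ∀ t ∈ Icc t₀ tm, LipschitzWith K (f t))
    (hh : IsODESolutionOn f h t₀ tm) (hg : IsODESolutionOn f g t₀ tm) (hm : h tm = g tm) :
    h t₀ = g t₀ :=
  dist_le_zero.1 <| by simpa [hm] using dist_le_exp_mul_dist_backward ht hf hh hg

end IsODESolutionOn

theorem ode_flow_map_homeomorphic_general
    {E : Type*} [NormedAddCommGroup E] [NormedSpace ℝ E]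
    (t₀ tm : ℝ) (ht : t₀ ≤ tm) (K : ℝ) (hK : 0 ≤ K)
    (f : ℝ → E → E) (hf : ∀ t ∈ Set.Icc t₀ tm, LipschitzWith ⟨K, hK⟩ (f t))
    (Φ Ψ : E → E)
    (hΦ : ∀ x : E, ∃ h : ℝ → E,
      IsODESolutionOn f h t₀ tm ∧ h t₀ = x ∧ h tm = Φ x)
    (hΨ : ∀ y : E, ∃ g : ℝ → E,
      IsODESolutionOn f g t₀ tm ∧ g tm = y ∧ g t₀ = Ψ y) :
    Function.Bijective Φ ∧ (∀ x : E, Ψ (Φ x) = x) ∧ (∀ y : E, Φ (Ψ y) = y) ∧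
      LipschitzWith ⟨Real.exp (K * (tm - t₀)), Real.exp_nonneg _⟩ Φ ∧
      LipschitzWith ⟨Real.exp (K * (tm - t₀)), Real.exp_nonneg _⟩ Ψ ∧
      Continuous Φ ∧ Continuous Ψ := by
  choose h hh hh₀ hhm using hΦ
  choose g hg hgm hg₀ using hΨ
  have left_inv (x : E) : Ψ (Φ x) = x := by
    have h₀ := (hh x).eq_left_of_eq_right ht hf (hg (Φ x)) ((hhm x).trans (hgm _).symm)
    rwa [hh₀, hg₀, eq_comm] at h₀
  have right_inv (y : E) : Φ (Ψ y) = y := by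
    have hm := (hh (Ψ y)).eq_right_of_eq_left ht hf (hg y) ((hh₀ _).trans (hg₀ y).symm)
    rwa [hhm, hgm] at hm
  have lipschitz_Φ : LipschitzWith ⟨exp (K * (tm - t₀)), exp_nonneg _⟩ Φ :=
    .of_dist_le_mul fun x y => by
      have hdist := (hh x).dist_le_exp_mul_dist ht hf (hh y)
      rwa [hh₀, hh₀, hhm, hhm] at hdist
  have lipschitz_Ψ : LipschitzWith ⟨exp (K * (tm - t₀)), exp_nonneg _⟩ Ψ :=
    .of_dist_le_mul fun x y => by
      have hdist := (hg x).dist_le_exp_mul_dist_backward ht hf (hg y)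
      rwa [hg₀, hg₀, hgm, hgm] at hdist
  exact ⟨Function.bijective_iff_has_inverse.2 ⟨Ψ, left_inv, right_inv⟩, left_inv, right_inv,
    lipschitz_Φ, lipschitz_Ψ, lipschitz_Φ.continuous, lipschitz_Ψ.continuous⟩

/-- Proposition 1's premise in full (OCT-GAN): the flow map `Φ` of a neural
ODE with `K`-Lipschitz vector field is a homeomorphism of `E`: it is bijective
with inverse `Ψ`, both `Φ` and `Ψ` are Lipschitz with constant
`exp(K·(tm − t₀))`, and in particular both are continuous. -/
theorem ode_flow_map_homeomorphic
    {E : Type*} [NormedAddCommGroup E] [NormedSpace ℝ E] [CompleteSpace E]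
    (t₀ tm : ℝ) (ht : t₀ ≤ tm) (K : ℝ) (hK : 0 ≤ K)
    (f : ℝ → E → E) (hf : ∀ t ∈ Set.Icc t₀ tm, LipschitzWith ⟨K, hK⟩ (f t))
    (Φ Ψ : E → E)
    (hΦ : ∀ x : E, ∃ h : ℝ → E,
      IsODESolutionOn f h t₀ tm ∧ h t₀ = x ∧ h tm = Φ x)
    (hΨ : ∀ y : E, ∃ g : ℝ → E,
      IsODESolutionOn f g t₀ tm ∧ g tm = y ∧ g t₀ = Ψ y) :
    Function.Bijective Φ ∧ (∀ x : E, Ψ (Φ x) = x) ∧ (∀ y : E, Φ (Ψ y) = y) ∧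
      LipschitzWith ⟨Real.exp (K * (tm - t₀)), Real.exp_nonneg _⟩ Φ ∧
      LipschitzWith ⟨Real.exp (K * (tm - t₀)), Real.exp_nonneg _⟩ Ψ ∧
      Continuous Φ ∧ Continuous Ψ :=
  ode_flow_map_homeomorphic_general t₀ tm ht K hK f hf Φ Ψ hΦ hΨ
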